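/- arXiv:2605.10797 — 2 statements merged into one kernel-verified Lean document; each statement's English description precedes it below -/
import Mathlib

section
/- Let F : ℝ^m × ℝ^{m×n} → ℝ be L-smooth along the iterate trajectory with respect to ‖(g,R)‖ = max(‖g‖_∞, ‖R‖_{S∞}), lower bounded by F_⋆, and consider iterates g_{t+1} = g_t − γ·sgn(∇_g F(g_t, R_t)), R_{t+1} = R_t + η·O_t where O_t minimizes ⟨∇_R F(g_t,R_t), O⟩ over ‖O‖_{S∞} ≤ 1. With Δ₁ ≥ F(g₁,R₁) − F_⋆ and η = γ = sqrt(Δ₁/(L T)), the iterates satisfy (1/T) Σ_{t=1}^T (‖∇_g F(g_t,R_t)‖_1 + ‖∇_R F(g_t,R_t)‖_{S1}) ≤ 4·sqrt(L·Δ₁/T). -/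
open Matrix

/-- Spectral norm (largest singular value) of a real matrix, as the operator
norm of the induced linear map between Euclidean spaces. -/
noncomputable def specNorm {m n : ℕ} (W : Matrix (Fin m) (Fin n) ℝ) : ℝ :=
  ‖LinearMap.toContinuousLinearMap (Matrix.toEuclideanLin W)‖

/-- Nuclear norm (sum of singular values) of a real matrix. -/
noncomputable def nuclearNorm {m n : ℕ} (W : Matrix (Fin m) (Fin n) ℝ) : ℝ :=
  ∑ j, Real.sqrt ((Matrix.isHermitian_conjTranspose_mul_self W).eigenvalues j)

/-- The largest eigenvalue of a (symmetric) matrix, as the supremum of its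
eigenvalues. -/
noncomputable def lambdaMax {m : ℕ} (M : Matrix (Fin m) (Fin m) ℝ) : ℝ :=
  sSup {r : ℝ | ∃ v : Fin m → ℝ, v ≠ 0 ∧ M.mulVec v = r • v}

/-- Euclidean norm of row `i` of `W`. -/
noncomputable def rowNorm {m n : ℕ} (W : Matrix (Fin m) (Fin n) ℝ) (i : Fin m) : ℝ :=
  Real.sqrt (∑ j, W i j ^ 2)

lemma specNorm_nonneg {m n : ℕ} (W : Matrix (Fin m) (Fin n) ℝ) : 0 ≤ specNorm W :=
  norm_nonneg _

lemma specNorm_smul {m n : ℕ} (c : ℝ) (W : Matrix (Fin m) (Fin n) ℝ) :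
    specNorm (c • W) = |c| * specNorm W := by
  unfold specNorm
  rw [_root_.map_smul, _root_.map_smul]
  rw [norm_smul c (LinearMap.toContinuousLinearMap (Matrix.toEuclideanLin W))]
  simp

lemma specNorm_le_one {m n : ℕ} (O : Matrix (Fin m) (Fin n) ℝ)
    (h : ((1 : Matrix (Fin n) (Fin n) ℝ) - Oᴴ * O).PosSemidef) : specNorm O ≤ 1 := by
  unfold specNorm
  refine ContinuousLinearMap.opNorm_le_bound _ zero_le_one fun x => ?_
  rw [one_mul]
  have hq := h.dotProduct_mulVec_nonneg (WithLp.equiv 2 (Fin n → ℝ) x)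
  set y : Fin n → ℝ := WithLp.equiv 2 (Fin n → ℝ) x with hy
  have hq' : y ⬝ᵥ ((Oᴴ * O) *ᵥ y) ≤ y ⬝ᵥ y := by
    have : star y = y := by simp
    rw [this, sub_mulVec, one_mulVec, dotProduct_sub] at hq
    linarith
  have hOx : ‖LinearMap.toContinuousLinearMap (Matrix.toEuclideanLin O) x‖ ^ 2
      = y ⬝ᵥ ((Oᴴ * O) *ᵥ y) := by
    rw [LinearMap.coe_toContinuousLinearMap', Matrix.toEuclideanLin_apply,
      EuclideanSpace.norm_eq, Real.sq_sqrt (by positivity)]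
    rw [← Matrix.mulVec_mulVec, Matrix.dotProduct_mulVec,
      Matrix.conjTranspose_eq_transpose_of_trivial, Matrix.vecMul_transpose]
    simp [dotProduct, sq]
    rfl
  have hx : ‖x‖ ^ 2 = y ⬝ᵥ y := by
    rw [EuclideanSpace.norm_eq, Real.sq_sqrt (by positivity)]
    simp [dotProduct, sq, hy]
  have h1 : ‖LinearMap.toContinuousLinearMap (Matrix.toEuclideanLin O) x‖ ^ 2 ≤ ‖x‖ ^ 2 := by
    rw [hOx, hx]; exact hq'
  nlinarith [norm_nonneg (LinearMap.toContinuousLinearMap (Matrix.toEuclideanLin O) x), norm_nonneg x]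

lemma conj_mul_conj {n : ℕ} (U A B : Matrix (Fin n) (Fin n) ℝ) (h : Uᴴ * U = 1) :
    (U * A * Uᴴ) * (U * B * Uᴴ) = U * (A * B) * Uᴴ := by
  simp only [Matrix.mul_assoc]
  rw [← Matrix.mul_assoc Uᴴ U, h, Matrix.one_mul]

lemma exists_dual {m n : ℕ} (W : Matrix (Fin m) (Fin n) ℝ) :
    ∃ O' : Matrix (Fin m) (Fin n) ℝ, specNorm O' ≤ 1 ∧
      (Wᵀ * O').trace = -nuclearNorm W := by
  classical
  have hP := Matrix.isHermitian_conjTranspose_mul_self W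
  set U : Matrix (Fin n) (Fin n) ℝ :=
    (Matrix.IsHermitian.eigenvectorUnitary hP : Matrix (Fin n) (Fin n) ℝ) with hUdef
  set lam := hP.eigenvalues with hlamdef
  have hlam : ∀ j, 0 ≤ lam j := fun j => Matrix.eigenvalues_conjTranspose_mul_self_nonneg W j
  have hU2 : Uᴴ * U = 1 := by
    rw [← Matrix.star_eq_conjTranspose]
    exact Matrix.mem_unitaryGroup_iff'.mp (Matrix.IsHermitian.eigenvectorUnitary hP).2
  have hU1 : U * Uᴴ = 1 := by
    rw [← Matrix.star_eq_conjTranspose]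
    exact Matrix.mem_unitaryGroup_iff.mp (Matrix.IsHermitian.eigenvectorUnitary hP).2
  have hspec : Wᴴ * W = U * Matrix.diagonal lam * Uᴴ := by
    have h := hP.spectral_theorem
    rw [Unitary.conjStarAlgAut_apply] at h
    rw [← Matrix.star_eq_conjTranspose]
    exact h
  set d : Fin n → ℝ := fun j => if lam j = 0 then 0 else (Real.sqrt (lam j))⁻¹ with hd
  set G := U * Matrix.diagonal d * Uᴴ with hG
  have hsd : star d = d := by funext j; simp
  have hGH : Gᴴ = G := by
    rw [hG]
    simp only [Matrix.conjTranspose_mul, Matrix.conjTranspose_conjTranspose,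
      Matrix.diagonal_conjTranspose, hsd]
    rw [Matrix.mul_assoc]
  have key1 : Wᴴ * (W * G) = U * Matrix.diagonal (fun j => Real.sqrt (lam j)) * Uᴴ := by
    have hfun : (fun i => lam i * d i) = fun j => Real.sqrt (lam j) := by
      funext j
      simp only [hd]
      by_cases h0 : lam j = 0
      · simp [h0]
      · have hpos : 0 < lam j := (hlam j).lt_of_ne (Ne.symm h0)
        have hs : Real.sqrt (lam j) * Real.sqrt (lam j) = lam j := Real.mul_self_sqrt (hlam j)
        have hsne : Real.sqrt (lam j) ≠ 0 := ne_of_gt (Real.sqrt_pos.mpr hpos)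
        rw [if_neg h0]
        field_simp
        rw [sq, hs]
    rw [← Matrix.mul_assoc, hspec, hG, conj_mul_conj _ _ _ hU2,
      Matrix.diagonal_mul_diagonal, hfun]
  refine ⟨-(W * G), ?_, ?_⟩
  · apply specNorm_le_one
    have h2 : (-(W * G))ᴴ * (-(W * G)) = Gᴴ * (Wᴴ * (W * G)) := by
      simp only [Matrix.conjTranspose_neg, Matrix.neg_mul, Matrix.mul_neg, neg_neg,
        Matrix.conjTranspose_mul]
      rw [Matrix.mul_assoc]
    set e : Fin n → ℝ := fun j => if lam j = 0 then 0 else 1 with he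
    have h3 : (-(W * G))ᴴ * (-(W * G)) = U * Matrix.diagonal e * Uᴴ := by
      have hfun2 : (fun i => d i * Real.sqrt (lam i)) = e := by
        funext j
        simp only [hd, he]
        by_cases h0 : lam j = 0
        · simp [h0]
        · have hpos : 0 < lam j := (hlam j).lt_of_ne (Ne.symm h0)
          have hsne : Real.sqrt (lam j) ≠ 0 := ne_of_gt (Real.sqrt_pos.mpr hpos)
          simp [h0, inv_mul_cancel₀ hsne]
      rw [h2, key1, hGH, hG, conj_mul_conj _ _ _ hU2, Matrix.diagonal_mul_diagonal, hfun2]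
    have h4 : (1 : Matrix (Fin n) (Fin n) ℝ) - (-(W * G))ᴴ * (-(W * G))
        = U * Matrix.diagonal (fun j => 1 - e j) * Uᴴ := by
      rw [h3]
      have : Matrix.diagonal (fun j => 1 - e j)
          = (1 : Matrix (Fin n) (Fin n) ℝ) - Matrix.diagonal e := by
        rw [← Matrix.diagonal_one, ← Matrix.diagonal_sub]
      rw [this, Matrix.mul_sub, Matrix.sub_mul, Matrix.mul_one, hU1]
    rw [h4]
    refine Matrix.PosSemidef.mul_mul_conjTranspose_same ?_ U
    refine Matrix.posSemidef_diagonal_iff.mpr fun j => ?_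
    by_cases h0 : lam j = 0 <;> simp [he, h0]
  · have hWt : Wᵀ = Wᴴ := (Matrix.conjTranspose_eq_transpose_of_trivial W).symm
    rw [hWt, Matrix.mul_neg, Matrix.trace_neg, key1, Matrix.trace_mul_comm,
      ← Matrix.mul_assoc, hU2, Matrix.one_mul, Matrix.trace_diagonal]
    rfl

lemma mul_sign' (x : ℝ) : x * Real.sign x = |x| := by
  rcases lt_trichotomy x 0 with h|h|h
  · rw [Real.sign_of_neg h, abs_of_neg h]; ring
  · simp [h]
  · rw [Real.sign_of_pos h, abs_of_pos h]; ring

lemma abs_sign_le' (x : ℝ) : |Real.sign x| ≤ 1 := by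
  rcases lt_trichotomy x 0 with h|h|h
  · simp [Real.sign_of_neg h]
  · simp [h]
  · simp [Real.sign_of_pos h]

lemma telescope' (f : ℕ → ℝ) (T : ℕ) :
    ∑ t ∈ Finset.Icc 1 T, (f t - f (t + 1)) = f 1 - f (T + 1) := by
  induction T with
  | zero => simp
  | succ T ih =>
    rw [← Finset.insert_Icc_right_eq_Icc_add_one (Nat.succ_le_succ (Nat.zero_le T)),
      Finset.sum_insert (by simp), ih]
    ring



/-- Deterministic convergence of Muown (SignSGD version): with `F` `L`-smooth
along the trajectory (w.r.t. the product max-norm), lower bounded by `Fstar`,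
sign updates on `g` and steepest-spectral-descent updates on `R`, and
stepsizes `γ = η = √(Δ₁/(L T))`, the average dual-norm gradient satisfies
`(1/T) Σ_t (‖∇_g F‖₁ + ‖∇_R F‖_{S1}) ≤ 4 √(L Δ₁ / T)`. -/
theorem stmt_9 {m n : ℕ} (F : (Fin m → ℝ) → Matrix (Fin m) (Fin n) ℝ → ℝ)
    (Gg : (Fin m → ℝ) → Matrix (Fin m) (Fin n) ℝ → (Fin m → ℝ))
    (GR : (Fin m → ℝ) → Matrix (Fin m) (Fin n) ℝ → Matrix (Fin m) (Fin n) ℝ)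
    (g : ℕ → Fin m → ℝ) (R O : ℕ → Matrix (Fin m) (Fin n) ℝ)
    (L Fstar Δ₁ γ η : ℝ) (T : ℕ) (hT : 1 ≤ T) (hL : 0 < L) (hΔ : 0 < Δ₁)
    -- `L`-smoothness along the trajectory, in descent-lemma form w.r.t. the
    -- product max-norm `‖(g,R)‖ = max(‖g‖_∞, ‖R‖_{S∞})`:
    (hsmooth : ∀ t ∈ Finset.Icc 1 T,
      F (g (t + 1)) (R (t + 1)) ≤ F (g t) (R t)
        + (∑ i, Gg (g t) (R t) i * (g (t + 1) i - g t i))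
        + ((GR (g t) (R t))ᵀ * (R (t + 1) - R t)).trace
        + L / 2 *
          (max (⨆ i, |g (t + 1) i - g t i|) (specNorm (R (t + 1) - R t))) ^ 2)
    -- lower bound:
    (hlb : ∀ (g' : Fin m → ℝ) (R' : Matrix (Fin m) (Fin n) ℝ), Fstar ≤ F g' R')
    (hΔ₁ : F (g 1) (R 1) - Fstar ≤ Δ₁)
    -- stepsizes:
    (hγ : γ = Real.sqrt (Δ₁ / (L * T))) (hη : η = γ)
    -- sign update on the magnitudes:
    (hgupd : ∀ t ∈ Finset.Icc 1 T,
      g (t + 1) = g t - γ • fun i => Real.sign (Gg (g t) (R t) i))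
    -- `O t` minimizes `⟨∇_R F(g_t,R_t), O⟩` over `‖O‖_{S∞} ≤ 1`:
    (hO : ∀ t ∈ Finset.Icc 1 T, specNorm (O t) ≤ 1 ∧
      ∀ O' : Matrix (Fin m) (Fin n) ℝ, specNorm O' ≤ 1 →
        ((GR (g t) (R t))ᵀ * (O t)).trace ≤ ((GR (g t) (R t))ᵀ * O').trace)
    (hRupd : ∀ t ∈ Finset.Icc 1 T, R (t + 1) = R t + η • O t) :
    (1 / (T : ℝ)) * ∑ t ∈ Finset.Icc 1 T,
        ((∑ i, |Gg (g t) (R t) i|) + nuclearNorm (GR (g t) (R t)))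
      ≤ 4 * Real.sqrt (L * Δ₁ / T) := by

  have hTpos : (0 : ℝ) < T := by exact_mod_cast Nat.lt_of_lt_of_le Nat.zero_lt_one hT
  have hγpos : 0 < γ := by
    rw [hγ]; exact Real.sqrt_pos.mpr (by positivity)
  have hγ2 : γ ^ 2 = Δ₁ / (L * T) := by
    rw [hγ]; exact Real.sq_sqrt (by positivity)
  -- per-step bound
  have hstep : ∀ t ∈ Finset.Icc 1 T,
      γ * ((∑ i, |Gg (g t) (R t) i|) + nuclearNorm (GR (g t) (R t)))
        ≤ F (g t) (R t) - F (g (t + 1)) (R (t + 1)) + L / 2 * γ ^ 2 := by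
    intro t ht
    have hdiff : ∀ i, g (t + 1) i - g t i = -(γ * Real.sign (Gg (g t) (R t) i)) := by
      intro i
      rw [hgupd t ht]
      simp [Pi.sub_apply]
    -- linear term in g
    have ha : (∑ i, Gg (g t) (R t) i * (g (t + 1) i - g t i))
        = -(γ * ∑ i, |Gg (g t) (R t) i|) := by
      rw [Finset.mul_sum, ← Finset.sum_neg_distrib]
      refine Finset.sum_congr rfl fun i _ => ?_
      rw [hdiff i, ← mul_sign' (Gg (g t) (R t) i)]
      ring
    -- trace term
    obtain ⟨O', hO'1, hO'2⟩ := exists_dual (GR (g t) (R t))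
    have hb : ((GR (g t) (R t))ᵀ * (R (t + 1) - R t)).trace
        ≤ -(γ * nuclearNorm (GR (g t) (R t))) := by
      have hR : R (t + 1) - R t = η • O t := by rw [hRupd t ht]; abel
      rw [hR, Matrix.mul_smul, Matrix.trace_smul, smul_eq_mul, hη]
      have h1 : ((GR (g t) (R t))ᵀ * (O t)).trace ≤ -nuclearNorm (GR (g t) (R t)) := by
        rw [← hO'2]; exact (hO t ht).2 O' hO'1
      nlinarith [hγpos.le]
    -- step norm bound
    have hmax : max (⨆ i, |g (t + 1) i - g t i|) (specNorm (R (t + 1) - R t)) ≤ γ := by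
      apply max_le
      · refine Real.iSup_le (fun i => ?_) hγpos.le
        rw [hdiff i, abs_neg, abs_mul, abs_of_pos hγpos]
        nlinarith [abs_sign_le' (Gg (g t) (R t) i), abs_nonneg (Real.sign (Gg (g t) (R t) i)), hγpos]
      · have hR : R (t + 1) - R t = η • O t := by rw [hRupd t ht]; abel
        rw [hR, specNorm_smul, hη, abs_of_pos hγpos]
        nlinarith [(hO t ht).1, specNorm_nonneg (O t), hγpos]
    have hmax0 : 0 ≤ max (⨆ i, |g (t + 1) i - g t i|) (specNorm (R (t + 1) - R t)) :=
      le_trans (specNorm_nonneg _) (le_max_right _ _)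
    have hmaxsq : (max (⨆ i, |g (t + 1) i - g t i|) (specNorm (R (t + 1) - R t))) ^ 2 ≤ γ ^ 2 :=
      pow_le_pow_left₀ hmax0 hmax 2
    have := hsmooth t ht
    rw [ha] at this
    nlinarith [this, hb, hmaxsq, hL]
  -- sum up
  set S := ∑ t ∈ Finset.Icc 1 T,
    ((∑ i, |Gg (g t) (R t) i|) + nuclearNorm (GR (g t) (R t))) with hS
  have hsum : γ * S ≤ Δ₁ + T * (L / 2 * γ ^ 2) := by
    have h1 : ∑ t ∈ Finset.Icc 1 T,
        γ * ((∑ i, |Gg (g t) (R t) i|) + nuclearNorm (GR (g t) (R t)))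
        ≤ ∑ t ∈ Finset.Icc 1 T,
          (F (g t) (R t) - F (g (t + 1)) (R (t + 1)) + L / 2 * γ ^ 2) :=
      Finset.sum_le_sum hstep
    rw [← Finset.mul_sum] at h1
    have h2 : ∑ t ∈ Finset.Icc 1 T,
        (F (g t) (R t) - F (g (t + 1)) (R (t + 1)) + L / 2 * γ ^ 2)
        = (F (g 1) (R 1) - F (g (T + 1)) (R (T + 1))) + T * (L / 2 * γ ^ 2) := by
      rw [Finset.sum_add_distrib, telescope' (fun t => F (g t) (R t)) T,
        Finset.sum_const, Nat.card_Icc]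
      simp [nsmul_eq_mul]
    rw [h2] at h1
    have h3 := hlb (g (T + 1)) (R (T + 1))
    calc γ * S ≤ (F (g 1) (R 1) - F (g (T + 1)) (R (T + 1))) + T * (L / 2 * γ ^ 2) := h1
    _ ≤ Δ₁ + T * (L / 2 * γ ^ 2) := by linarith
  have hhalf : (T : ℝ) * (L / 2 * γ ^ 2) = Δ₁ / 2 := by
    rw [hγ2]; field_simp
  have hkey : γ * S ≤ 3 / 2 * Δ₁ := by rw [hhalf] at hsum; linarith
  -- final algebra
  set s := Real.sqrt (L * Δ₁ / T) with hsdef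
  have hspos : 0 < s := Real.sqrt_pos.mpr (by positivity)
  have hprod : γ * s = Δ₁ / T := by
    rw [hγ, hsdef, ← Real.sqrt_mul (by positivity)]
    rw [show Δ₁ / (L * T) * (L * Δ₁ / T) = (Δ₁ / T) ^ 2 by field_simp]
    exact Real.sqrt_sq (by positivity)
  have h1 : S ≤ 3 / 2 * Δ₁ / γ := by
    rw [le_div_iff₀ hγpos]; linarith [hkey]
  have h2 : 3 / 2 * Δ₁ / γ = 3 / 2 * (s * T) := by
    have : Δ₁ = γ * s * T := by rw [hprod]; field_simp
    rw [this]; field_simp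
  have h3 : (1 / (T : ℝ)) * S ≤ (1 / (T : ℝ)) * (3 / 2 * (s * T)) :=
    mul_le_mul_of_nonneg_left (h1.trans_eq h2) (by positivity)
  calc (1 / (T : ℝ)) * S ≤ (1 / (T : ℝ)) * (3 / 2 * (s * T)) := h3
  _ = 3 / 2 * s := by field_simp
  _ ≤ 4 * s := by nlinarith [hspos]
end

section
/- Let R ∈ ℝ^{m×n} have nonzero rows, r its row-norm vector, D = Diag(1/r)·R, g ∈ ℝ^m, W(g,R) = Diag(g/r)·R and F(g,R) = ℒ(W(g,R)) for differentiable ℒ. Then ∇_R F(g,R) = Diag(g/r)·(∇ℒ(W) − Diag(∇_g F(g,R))·D), where ∇_g F(g,R) = diag(∇ℒ(W)·Dᵀ); in particular each row of ∇_R F(g,R) is orthogonal to the corresponding row of D. -/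
open Matrix

/-- Gradient of the reparameterized loss `F(g,R) = ℒ(Diag(g/r(R)) R)` with
respect to `R`: `∇_R F = Diag(g/r)(∇ℒ(W) - Diag(diag(∇ℒ(W) Dᵀ)) D)`;
in particular each row of `∇_R F` is orthogonal to the corresponding row
of `D`. -/
theorem stmt_17 {m n : ℕ} (R : Matrix (Fin m) (Fin n) ℝ)
    (hrow : ∀ i, R i ≠ 0)
    (g : Fin m → ℝ)
    (r : Fin m → ℝ) (hr : ∀ i, r i = rowNorm R i)
    (D : Matrix (Fin m) (Fin n) ℝ)
    (hD : D = Matrix.diagonal (fun i => (r i)⁻¹) * R)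
    (L : (Fin m → Fin n → ℝ) → ℝ)
    (gradL : Matrix (Fin m) (Fin n) ℝ → Matrix (Fin m) (Fin n) ℝ)
    (W : Matrix (Fin m) (Fin n) ℝ)
    (hW : W = Matrix.diagonal (fun i => g i / r i) * R)
    (f' : (Fin m → Fin n → ℝ) →L[ℝ] ℝ)
    (hL : HasFDerivAt L f' W)
    (hf' : ∀ H : Matrix (Fin m) (Fin n) ℝ, f' H = ((gradL W)ᵀ * H).trace)
    (gradgF : Fin m → ℝ)
    (hgradg : ∀ i, gradgF i = ∑ j, gradL W i j * D i j)
    (gradRF : Matrix (Fin m) (Fin n) ℝ)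
    (hgradR : gradRF = Matrix.diagonal (fun i => g i / r i) *
      (gradL W - Matrix.diagonal gradgF * D)) :
    DifferentiableAt ℝ
        (fun R' : Fin m → Fin n → ℝ =>
          L (Matrix.diagonal (fun i => g i / rowNorm (Matrix.of R') i) *
            Matrix.of R')) R ∧
      (∀ H : Matrix (Fin m) (Fin n) ℝ,
        fderiv ℝ
          (fun R' : Fin m → Fin n → ℝ =>
            L (Matrix.diagonal (fun i => g i / rowNorm (Matrix.of R') i) *
              Matrix.of R')) R H = (gradRFᵀ * H).trace) ∧
      ∀ i, ∑ j, gradRF i j * D i j = 0 := by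
  classical
  -- positivity of row norms
  have hs : ∀ i, 0 < ∑ k, R i k * R i k := by
    intro i
    obtain ⟨k, hk⟩ := Function.ne_iff.mp (hrow i)
    exact Finset.sum_pos' (fun k _ => mul_self_nonneg _)
      ⟨k, Finset.mem_univ k, mul_self_pos.mpr hk⟩
  have hrr : ∀ i, r i = Real.sqrt (∑ k, R i k * R i k) := by
    intro i
    rw [hr]
    unfold rowNorm
    congr 1
    exact Finset.sum_congr rfl fun k _ => pow_two (R i k)
  have hrpos : ∀ i, 0 < r i := by
    intro i; rw [hrr]; exact Real.sqrt_pos.mpr (hs i)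
  have hrne : ∀ i, r i ≠ 0 := fun i => (hrpos i).ne'
  have hrsq : ∀ i, r i * r i = ∑ k, R i k * R i k := by
    intro i; rw [hrr]; exact Real.mul_self_sqrt (hs i).le
  -- projections and the explicit derivative of the inner map
  set P : Fin m → Fin n → ((Fin m → Fin n → ℝ) →L[ℝ] ℝ) := fun i j =>
    ((ContinuousLinearMap.proj j : (Fin n → ℝ) →L[ℝ] ℝ).comp
      (ContinuousLinearMap.proj i : (Fin m → Fin n → ℝ) →L[ℝ] (Fin n → ℝ))) with hPdef
  set c' : Fin m → Fin n → ((Fin m → Fin n → ℝ) →L[ℝ] ℝ) := fun i j =>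
    (g i / r i) • P i j - (g i * R i j / r i ^ 3) • (∑ k, R i k • P i k) with hc'def
  have hc'app : ∀ i j (H : Fin m → Fin n → ℝ),
      c' i j H = g i / r i * H i j -
        g i * R i j / r i ^ 3 * ∑ k, R i k * H i k := by
    intro i j H
    simp [hc'def, hPdef, ContinuousLinearMap.sum_apply]
  have hP : ∀ i j, HasFDerivAt (fun R' : Fin m → Fin n → ℝ => R' i j) (P i j) R :=
    fun i j => (P i j).hasFDerivAt
  have hcomp : ∀ i j, HasFDerivAt
      (fun R' : Fin m → Fin n → ℝ => g i / Real.sqrt (∑ k, R' i k * R' i k) * R' i j)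
      (c' i j) R := by
    intro i j
    have hq : HasFDerivAt (fun R' : Fin m → Fin n → ℝ => ∑ k, R' i k * R' i k)
        (∑ k, (R i k • P i k + R i k • P i k)) R :=
      HasFDerivAt.fun_sum fun k _ => (hP i k).mul (hP i k)
    have hd : HasDerivAt (fun s : ℝ => g i / Real.sqrt s)
        ((0 * Real.sqrt (∑ k, R i k * R i k) -
            g i * (1 / (2 * Real.sqrt (∑ k, R i k * R i k)))) /
          Real.sqrt (∑ k, R i k * R i k) ^ 2) (∑ k, R i k * R i k) :=
      (hasDerivAt_const _ _).div (Real.hasDerivAt_sqrt (hs i).ne')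
        (Real.sqrt_pos.mpr (hs i)).ne'
    have hcd := (hd.comp_hasFDerivAt (E := Fin m → Fin n → ℝ) R hq).mul (hP i j)
    refine (hcd.congr_fderiv ?_).congr_of_eventuallyEq (Filter.Eventually.of_forall fun _ => rfl)
    refine ContinuousLinearMap.ext fun H => ?_
    rw [hc'app]
    simp only [ContinuousLinearMap.add_apply, ContinuousLinearMap.smul_apply,
      ContinuousLinearMap.sum_apply, smul_eq_mul, hPdef,
      ContinuousLinearMap.comp_apply, ContinuousLinearMap.proj_apply,
      Function.comp_apply]
    simp only [Function.comp_def]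
    rw [← hrr i]
    have h2 : ∑ k, (R i k * H i k + R i k * H i k) = 2 * ∑ k, R i k * H i k := by
      rw [Finset.mul_sum]; exact Finset.sum_congr rfl fun k _ => by ring
    rw [h2]
    field_simp
    ring
  -- the derivative of the full inner map
  have hφ : HasFDerivAt
      (fun R' : Fin m → Fin n → ℝ =>
        fun i j => g i / Real.sqrt (∑ k, R' i k * R' i k) * R' i j)
      (ContinuousLinearMap.pi fun i => ContinuousLinearMap.pi fun j => c' i j) R := by
    apply hasFDerivAt_pi.mpr
    intro i
    exact hasFDerivAt_pi.mpr fun j => hcomp i j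
  -- identify functions
  have hfun : ∀ R' : Fin m → Fin n → ℝ,
      (Matrix.diagonal (fun i => g i / rowNorm (Matrix.of R') i) * Matrix.of R') =
      fun i j => g i / Real.sqrt (∑ k, R' i k * R' i k) * R' i j := by
    intro R'
    funext i j
    rw [Matrix.diagonal_mul]
    have hrw : rowNorm (Matrix.of R') i = Real.sqrt (∑ k, R' i k * R' i k) := by
      unfold rowNorm
      congr 1
      exact Finset.sum_congr rfl fun k _ => pow_two _
    rw [hrw]
    rfl
  have hWeq : (fun i j => g i / Real.sqrt (∑ k, R i k * R i k) * R i j) = W := by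
    funext i j
    rw [hW, Matrix.diagonal_mul, ← hrr i]
  have hL' : HasFDerivAt L f'
      (fun i j => g i / Real.sqrt (∑ k, R i k * R i k) * R i j) := hWeq ▸ hL
  have hG : HasFDerivAt
      (fun R' : Fin m → Fin n → ℝ =>
        L (Matrix.diagonal (fun i => g i / rowNorm (Matrix.of R') i) * Matrix.of R'))
      (f'.comp (ContinuousLinearMap.pi fun i => ContinuousLinearMap.pi fun j => c' i j))
      R := by
    have h := hL'.comp (𝕜 := ℝ) (E := Fin m → Fin n → ℝ) R hφ
    simpa only [Function.comp_def, hfun] using h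
  -- entries of gradRF
  have hη : ∀ i j, gradRF i j = g i / r i * gradL W i j -
      g i / r i ^ 3 * R i j * ∑ k, gradL W i k * R i k := by
    intro i j
    rw [hgradR]
    rw [Matrix.diagonal_mul, Matrix.sub_apply, Matrix.diagonal_mul, hgradg i]
    have hDk : ∀ k, D i k = (r i)⁻¹ * R i k := by
      intro k; rw [hD, Matrix.diagonal_mul]
    simp only [hDk]
    have : ∑ k, gradL W i k * ((r i)⁻¹ * R i k) = (r i)⁻¹ * ∑ k, gradL W i k * R i k := by
      rw [Finset.mul_sum]; exact Finset.sum_congr rfl fun k _ => by ring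
    rw [this]
    have := hrne i
    field_simp
  refine ⟨hG.differentiableAt, fun H => ?_, fun i => ?_⟩
  · rw [hG.fderiv]; show f' _ = _; refine (hf' _).trans ?_
    -- traces
    show ∑ j, ∑ i, (gradL W)ᵀ j i * _ = ∑ j, ∑ i, gradRFᵀ j i * H i j
    simp only [Matrix.transpose_apply]
    rw [Finset.sum_comm]
    conv_rhs => rw [Finset.sum_comm]
    refine Finset.sum_congr rfl fun i _ => ?_
    have happ : ∀ j, (ContinuousLinearMap.pi fun i => ContinuousLinearMap.pi
        fun j => c' i j) H i j = c' i j H := fun j => rfl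
    calc ∑ j, gradL W i j *
          (ContinuousLinearMap.pi fun i => ContinuousLinearMap.pi fun j => c' i j) H i j
        = ∑ j, (g i / r i * (gradL W i j * H i j) -
            ∑ k, g i / r i ^ 3 * (gradL W i j * R i j) * (R i k * H i k)) := by
          refine Finset.sum_congr rfl fun j _ => ?_
          refine (congrArg (gradL W i j * ·) (hc'app i j H)).trans ?_; rw [mul_sub]
          congr 1
          · ring
          · rw [← mul_assoc, Finset.mul_sum]
            exact Finset.sum_congr rfl fun k _ => by ring
      _ = (∑ j, g i / r i * (gradL W i j * H i j)) -
            ∑ j, ∑ k, g i / r i ^ 3 * (gradL W i j * R i j) * (R i k * H i k) :=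
          Finset.sum_sub_distrib _ _
      _ = (∑ j, g i / r i * (gradL W i j * H i j)) -
            ∑ j, ∑ k, g i / r i ^ 3 * (gradL W i k * R i k) * (R i j * H i j) := by
          rw [Finset.sum_comm]
      _ = ∑ j, (g i / r i * (gradL W i j * H i j) -
            ∑ k, g i / r i ^ 3 * (gradL W i k * R i k) * (R i j * H i j)) :=
          (Finset.sum_sub_distrib _ _).symm
      _ = ∑ j, gradRF i j * H i j := by
          refine Finset.sum_congr rfl fun j _ => ?_
          rw [hη i j, sub_mul]
          congr 1
          · ring
          · rw [Finset.mul_sum, Finset.sum_mul]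
            exact Finset.sum_congr rfl fun k _ => by ring
  · -- orthogonality
    have hDk : ∀ j, D i j = (r i)⁻¹ * R i j := by
      intro j; rw [hD, Matrix.diagonal_mul]
    calc ∑ j, gradRF i j * D i j
        = ∑ j, (g i / r i ^ 2 * (gradL W i j * R i j) -
            g i / r i ^ 4 * (∑ k, gradL W i k * R i k) * (R i j * R i j)) := by
          refine Finset.sum_congr rfl fun j _ => ?_
          rw [hη i j, hDk j, sub_mul]
          congr 1
          · field_simp
          · field_simp
      _ = g i / r i ^ 2 * (∑ j, gradL W i j * R i j) -
            g i / r i ^ 4 * (∑ k, gradL W i k * R i k) * (r i * r i) := by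
          rw [Finset.sum_sub_distrib]
          congr 1
          · rw [Finset.mul_sum]
          · rw [← Finset.mul_sum, ← hrsq i]
      _ = 0 := by
          have h := hrne i
          field_simp
          ring
end
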